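/- arXiv:2112.05990 — 4 statements merged into one kernel-verified Lean document; each statement's English description precedes it below -/
import Mathlib

section
/- Suppose the NFA M satisfies the completeness conditions: (1) for every valuation v0 satisfying Init and every v1 with R(v0, v1), there is an initial state q0 ∈ Q0 and an outgoing transition from q0 labeled by a predicate that v1 satisfies; and (2) for every state q of M, every predicate p on an incoming transition to q, and every pair of valuations (v, v') with v ⊨ p and R(v, v'), some outgoing transition from q has a predicate satisfied by v'. Then every trace of S is accepted by M. -/
/-- A trace of the system `S = (X, X', R, Init)` over valuations. -/
def IsTrace {V : Type*} (Init : V → Prop) (R : V → V → Prop) : List V → Prop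
  | [] => False
  | v1 :: rest => (∃ v', Init v' ∧ R v' v1) ∧ List.Chain' R (v1 :: rest)

/-- The transition function of a predicate-labeled NFA with transitions
`Trans ⊆ Q × (V → Prop) × Q`: a transition `q → q'` labeled `p` is taken on
input `v` iff `p v`. -/
def predDelta {V Q : Type*} (Trans : Set (Q × (V → Prop) × Q)) :
    Q → V → Set Q :=
  fun q v => {q' | ∃ p, (q, p, q') ∈ Trans ∧ p v}

def AcceptsFrom {Q A : Type*} (δ : Q → A → Set Q) : Q → List A → Prop
  | _, [] => True
  | q, a :: w => ∃ q' ∈ δ q a, AcceptsFrom δ q' w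

def Accepts {Q A : Type*} (Q0 : Set Q) (δ : Q → A → Set Q) (w : List A) : Prop :=
  ∃ q ∈ Q0, AcceptsFrom δ q w

/-- Theorem 1: if the completeness conditions (1) and (2) extracted from the
candidate abstraction `M` hold on the system `S`, then every trace of `S` is
accepted by `M`. -/
theorem completeness_conditions_imply_trace_inclusion
    {V Q : Type*} (Init : V → Prop) (R : V → V → Prop)
    (Q0 : Set Q) (Trans : Set (Q × (V → Prop) × Q))
    -- Condition (1): initial transitions are covered.
    (cond1 : ∀ v0 v1, Init v0 → R v0 v1 →
      ∃ q0 ∈ Q0, ∃ p, ∃ q', (q0, p, q') ∈ Trans ∧ p v1)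
    -- Condition (2): for every state `q`, every incoming predicate `p` of `q`,
    -- and every system transition from a valuation satisfying `p`, some
    -- outgoing predicate of `q` is satisfied by the successor.
    (cond2 : ∀ q : Q, ∀ p : V → Prop, (∃ qs, (qs, p, q) ∈ Trans) →
      ∀ v v', p v → R v v' →
        ∃ po, ∃ q', (q, po, q') ∈ Trans ∧ po v') :
    ∀ σ, IsTrace Init R σ → Accepts Q0 (predDelta Trans) σ := by
  have key : ∀ (rest : List V) (v : V) (q : Q) (p : V → Prop),
      (∃ qs, (qs, p, q) ∈ Trans) → p v → List.Chain' R (v :: rest) →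
      AcceptsFrom (predDelta Trans) q rest := by
    intro rest
    induction rest with
    | nil => intro _ _ _ _ _ _; trivial
    | cons v' rest' ih =>
      intro v q p hin hpv hch
      obtain ⟨po, q', htr, hpo⟩ := cond2 q p hin v v' hpv (List.isChain_cons_cons.mp hch).1
      exact ⟨q', ⟨po, htr, hpo⟩, ih v' q' po ⟨q, htr⟩ hpo (List.isChain_cons_cons.mp hch).2⟩
  rintro (_ | ⟨v1, rest⟩) htr
  · exact absurd htr id
  · obtain ⟨⟨v0, hInit, hR⟩, hch⟩ := htr
    obtain ⟨q0, hq0, p, q', htrans, hp⟩ := cond1 v0 v1 hInit hR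
    exact ⟨q0, hq0, q', ⟨p, htrans, hp⟩, key rest v1 q' p ⟨q0, htrans⟩ hp hch⟩
end

section
/- Let σ be a trace of S not accepted by the NFA M, and let σ' = v1,…,vj be the longest prefix of σ accepted by M with j ≥ 1. Then there exists a run of M on σ' ending in a state q such that some incoming predicate of q is satisfied by vj, R(vj, v(j+1)) holds, and no outgoing predicate of q is satisfied by v(j+1); i.e., condition (2) of the completeness hypothesis is violated at q. -/
/-- `v 1, …, v n` is a trace of the system (1-indexed functional encoding). -/
def IsTraceFun {V : Type*} (Init : V → Prop) (R : V → V → Prop)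
    (v : ℕ → V) (n : ℕ) : Prop :=
  1 ≤ n ∧ (∃ v0, Init v0 ∧ R v0 (v 1)) ∧
    ∀ t, 1 ≤ t → t < n → R (v t) (v (t + 1))

/-- The NFA (all states accepting) accepts the prefix `v 1, …, v j`:
there is a run `q 1, …, q (j+1)` with `q 1` initial. -/
def AcceptsFun {V Q : Type*} (Q0 : Set Q) (δ : Q → V → Set Q)
    (v : ℕ → V) (j : ℕ) : Prop :=
  ∃ q : ℕ → Q, q 1 ∈ Q0 ∧ ∀ i, 1 ≤ i → i ≤ j → q (i + 1) ∈ δ (q i) (v i)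

/-- If `σ` is a trace of `S` not accepted by `M` and `σ' = v 1, …, v j`
(`j ≥ 1`) is its longest accepted prefix, then some run of `M` on `σ'` ends
in a state `q (j+1)` that has an incoming predicate satisfied by `v j`, with
`R (v j) (v (j+1))`, and no outgoing predicate of `q (j+1)` is satisfied by
`v (j+1)`: condition (2) is violated at that state. -/
theorem longest_accepted_prefix_violates_cond2
    {V Q : Type*} (Init : V → Prop) (R : V → V → Prop)
    (Q0 : Set Q) (Trans : Set (Q × (V → Prop) × Q))
    (v : ℕ → V) (n j : ℕ)
    (htrace : IsTraceFun Init R v n)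
    (hnotacc : ¬ AcceptsFun Q0 (predDelta Trans) v n)
    (hj1 : 1 ≤ j) (hjn : j < n)
    (hacc : AcceptsFun Q0 (predDelta Trans) v j)
    (hlongest : ∀ m, j < m → m ≤ n → ¬ AcceptsFun Q0 (predDelta Trans) v m) :
    ∃ q : ℕ → Q, q 1 ∈ Q0 ∧
      (∀ i, 1 ≤ i → i ≤ j → q (i + 1) ∈ predDelta Trans (q i) (v i)) ∧
      (∃ p qs, (qs, p, q (j + 1)) ∈ Trans ∧ p (v j)) ∧
      R (v j) (v (j + 1)) ∧
      (∀ p q', (q (j + 1), p, q') ∈ Trans → ¬ p (v (j + 1))) := by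
  obtain ⟨q, hq0, hstep⟩ := hacc
  refine ⟨q, hq0, hstep, ?_, htrace.2.2 j hj1 hjn, ?_⟩
  · obtain ⟨p, hp, hpv⟩ := hstep j hj1 le_rfl
    exact ⟨p, q j, hp, hpv⟩
  · intro p q' htr hpv
    apply hlongest (j + 1) (Nat.lt_succ_self j) hjn
    refine ⟨fun i => if i = j + 2 then q' else q i, ?_, ?_⟩
    · simp only [show (1 : ℕ) ≠ j + 2 by omega, if_false]; exact hq0
    · intro i hi1 hij
      by_cases h : i = j + 1
      · subst h
        simp only [if_pos rfl, show j + 1 ≠ j + 2 by omega, if_false]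
        exact ⟨p, htr, hpv⟩
      · have hle : i ≤ j := by omega
        simp only [show i ≠ j + 2 by omega, show i + 1 ≠ j + 2 by omega, if_false]
        exact hstep i hi1 hle
end

section
/- If the NFA M satisfies the completeness conditions (1) and (2), then the relation relating v to q whenever v satisfies some predicate on an incoming transition to q is a simulation relation between S and M. -/
/-- `R'` is a simulation between the system and the NFA. -/
def IsSimulation {V Q : Type*} (R : V → V → Prop)
    (δ : Q → V → Set Q) (R' : V → Q → Prop) : Prop :=
  ∀ v q, R' v q → ∀ v', R v v' → ∃ q' ∈ δ q v', R' v' q'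

/-- If the NFA `M` satisfies the completeness conditions (1) and (2), then
the relation relating a valuation `v` to a state `q` whenever `v` satisfies
some predicate on an incoming transition to `q` is a simulation between `S`
and `M`. -/
theorem incoming_predicate_relation_is_simulation
    {V Q : Type*} (Init : V → Prop) (R : V → V → Prop)
    (Q0 : Set Q) (Trans : Set (Q × (V → Prop) × Q))
    (cond1 : ∀ v0 v1, Init v0 → R v0 v1 →
      ∃ q0 ∈ Q0, ∃ p, ∃ q', (q0, p, q') ∈ Trans ∧ p v1)
    (cond2 : ∀ q : Q, ∀ p : V → Prop, (∃ qs, (qs, p, q) ∈ Trans) →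
      ∀ v v', p v → R v v' →
        ∃ po, ∃ q', (q, po, q') ∈ Trans ∧ po v') :
    IsSimulation R (predDelta Trans)
      (fun v q => ∃ p qs, (qs, p, q) ∈ Trans ∧ p v) := by
  rintro v q ⟨p, qs, hmem, hpv⟩ v' hR
  obtain ⟨po, q', hT, hpo⟩ := cond2 q p ⟨qs, hmem⟩ v v' hpv hR
  exact ⟨q', ⟨po, hT, hpo⟩, po, q, hT, hpo⟩
end

section
/- Soundness of the base-and-step k-induction unreachability check: if (base case) no execution of length at most k starting from an Init state reaches a state satisfying s', and (step case) for every sequence of k consecutive transitions among states all violating s', the next state also violates s', then no reachable state of S satisfies s'. -/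
/-- A valuation is reachable if there is a finite sequence of `R`-steps from
an initial valuation to it. -/
def Reachable {V : Type*} (Init : V → Prop) (R : V → V → Prop) (u : V) : Prop :=
  ∃ v0, Init v0 ∧ Relation.ReflTransGen R v0 u

/-- Soundness of the base-and-step k-induction unreachability check: if no
execution of length at most `k` from an initial state reaches a state
satisfying `s'`, and whenever `k` consecutive states all violate `s'` the next
state also violates `s'`, then no reachable state satisfies `s'`. -/
theorem k_induction_unreachability_sound
    {V : Type*} (Init : V → Prop) (R : V → V → Prop)
    (s' : V → Prop) (k : ℕ) (hk : 1 ≤ k)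
    -- Base case: executions of length at most `k` from `Init` avoid `s'`.
    (hbase : ∀ (v : ℕ → V) (m : ℕ), m ≤ k → Init (v 0) →
      (∀ i, i < m → R (v i) (v (i + 1))) → ∀ i, i ≤ m → ¬ s' (v i))
    -- Step case: `k` consecutive states violating `s'` force the next state
    -- to violate `s'` as well.
    (hstep : ∀ u : ℕ → V, (∀ i, i < k → R (u i) (u (i + 1))) →
      (∀ i, i ≤ k - 1 → ¬ s' (u i)) → ¬ s' (u k)) :
    ∀ u, Reachable Init R u → ¬ s' u := by
  -- main lemma: any path of length n from Init avoids s' everywhere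
  have main : ∀ n (v : ℕ → V), Init (v 0) → (∀ i, i < n → R (v i) (v (i + 1))) →
      ∀ i, i ≤ n → ¬ s' (v i) := by
    intro n
    induction n using Nat.strong_induction_on with
    | _ n IH =>
      intro v hInit hR i hi
      by_cases hn : n ≤ k
      · exact hbase v n hn hInit hR i hi
      · push_neg at hn
        have hprev : ∀ j, j ≤ n - 1 → ¬ s' (v j) := by
          intro j hj
          exact IH (n - 1) (by omega) v hInit (fun i hi => hR i (by omega)) j hj
        rcases Nat.lt_or_ge i n with h | h
        · exact hprev i (by omega)
        · have hin : i = n := by omega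
          subst hin
          have : ¬ s' ((fun j => v (i - k + j)) k) := by
            apply hstep (fun j => v (i - k + j))
            · intro j hj
              show R (v (i - k + j)) (v (i - k + (j + 1)))
              have e : i - k + (j + 1) = (i - k + j) + 1 := by omega
              rw [e]
              exact hR (i - k + j) (by omega)
            · intro j hj
              show ¬ s' (v (i - k + j))
              exact hprev (i - k + j) (by omega)
          have e : i - k + k = i := by omega
          simpa [e] using this
  rintro u ⟨v0, hInit, hrt⟩
  -- extract a finite path from the ReflTransGen
  have : ∃ n, ∃ v : ℕ → V, Init (v 0) ∧ (∀ i, i < n → R (v i) (v (i + 1))) ∧ v n = u := by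
    induction hrt with
    | refl => exact ⟨0, fun _ => v0, hInit, by omega, rfl⟩
    | @tail b c hab hbc ih =>
      rcases ih with ⟨n, v, h0, hR, hlast⟩
      refine ⟨n + 1, fun i => if i ≤ n then v i else c, ?_, ?_, ?_⟩
      · simpa using h0
      · intro i hi
        rcases Nat.lt_or_ge i n with h | h
        · simp only [if_pos (by omega : i ≤ n), if_pos (by omega : i + 1 ≤ n)]
          exact hR i h
        · have : i = n := by omega
          subst this
          simp only [if_pos le_rfl, if_neg (by omega : ¬ i + 1 ≤ i)]
          rw [hlast]; exact hbc
      · simp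
  rcases this with ⟨n, v, h0, hR, hlast⟩
  rw [← hlast]
  exact main n v h0 hR n le_rfl
end
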